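/- arXiv:2112.13698 — 2 statements merged into one kernel-verified Lean document; each statement's English description precedes it below -/
import Mathlib

section
/- Let M be an m×n complex matrix such that every column of M lies in the span of the columns of G (equivalently, the range of M, viewed as a linear map ℂⁿ → ℂᵐ, is contained in the range of G). Then for every x ∈ ℂⁿ and λ ∈ ℂ, if Qᴴ·(M·x) = λ·(R·x) then M·x = λ·(G·x). (That is, when the columns of M lie in the column space of G, the square projected problem QᴴM x = λ R x implies the rectangular problem M x = λ G x.) -/
/-! Since `G = Q R`, the vector `M x` lies in the range of `Q`, on which `Q Qᴴ` is the identity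
because `Qᴴ Q = 1`. Hence `M x = Q (Qᴴ M x) = λ Q R x = λ G x`. -/

open Matrix

namespace Matrix

theorem mulVec_mulVec_eq_self_of_mem_range {m n α : Type*} [Fintype m] [Fintype n]
    [DecidableEq n] [CommSemiring α] {P : Matrix n m α} {Q : Matrix m n α}
    (hPQ : P * Q = 1) {v : m → α} (hv : v ∈ LinearMap.range Q.mulVecLin) :
    Q *ᵥ (P *ᵥ v) = v := by
  obtain ⟨y, rfl⟩ := hv
  rw [mulVecLin_apply, mulVec_mulVec (M := P), hPQ, one_mulVec]

theorem range_mulVecLin_mul_le {m n k α : Type*} [Fintype n] [Fintype k] [CommSemiring α]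
    (Q : Matrix m n α) (R : Matrix n k α) :
    LinearMap.range (Q * R).mulVecLin ≤ LinearMap.range Q.mulVecLin := by
  rintro _ ⟨y, rfl⟩
  exact ⟨R *ᵥ y, by simp only [mulVecLin_apply, mulVec_mulVec]⟩

end Matrix

theorem projected_implies_rect_eig_general
    (m n : ℕ)
    (G Q : Matrix (Fin m) (Fin n) ℂ)
    (R : Matrix (Fin n) (Fin n) ℂ)
    (hQ : Qᴴ * Q = 1)
    (hQR : G = Q * R)
    (M : Matrix (Fin m) (Fin n) ℂ)
    (hrange : LinearMap.range M.mulVecLin ≤ LinearMap.range G.mulVecLin) :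
    ∀ (x : Fin n → ℂ) (lam : ℂ),
      Qᴴ.mulVec (M.mulVec x) = lam • R.mulVec x →
      M.mulVec x = lam • G.mulVec x := by
  intro x lam hproj
  have hMx : M *ᵥ x ∈ LinearMap.range Q.mulVecLin :=
    range_mulVecLin_mul_le Q R (hQR ▸ hrange ⟨x, rfl⟩)
  calc M *ᵥ x = Q *ᵥ (Qᴴ *ᵥ (M *ᵥ x)) := (mulVec_mulVec_eq_self_of_mem_range hQ hMx).symm
    _ = lam • G *ᵥ x := by rw [hproj, mulVec_smul, hQR, mulVec_mulVec]

/-- If every column of `M` lies in the column space of `G` (i.e. the range of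
`M` as a linear map is contained in the range of `G`), then every solution of
the square projected problem `Qᴴ M x = λ R x` also solves the rectangular
problem `M x = λ G x`, given a QR factorization `G = Q R` with `Qᴴ Q = I` and
`R` invertible upper triangular. -/
theorem projected_implies_rect_eig
    (m n : ℕ) (hm : 0 < m) (hn : 0 < n) (hmn : n ≤ m)
    (G Q : Matrix (Fin m) (Fin n) ℂ)
    (R : Matrix (Fin n) (Fin n) ℂ)
    (hQ : Qᴴ * Q = 1)
    (hRtri : R.BlockTriangular id)
    (hRinv : IsUnit R)
    (hQR : G = Q * R)
    (M : Matrix (Fin m) (Fin n) ℂ)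
    (hrange : LinearMap.range M.mulVecLin ≤ LinearMap.range G.mulVecLin) :
    ∀ (x : Fin n → ℂ) (lam : ℂ),
      Qᴴ.mulVec (M.mulVec x) = lam • R.mulVec x →
      M.mulVec x = lam • G.mulVec x :=
  projected_implies_rect_eig_general m n G Q R hQ hQR M hrange
end

section
/- Let M be an m×n complex matrix, B a μ×m complex matrix with 0 < μ < n, and let Q₋ denote the m×(n−μ) matrix formed by the first n−μ columns of Q. Then for x ∈ ℂⁿ and λ ∈ ℂ, the pair of conditions (Q₋ᴴ·(M·x) = λ·(Q₋ᴴ·G·x) and (B·G)·x = 0) holds if and only if (B·G)·x = 0 and the residual M·x − λ·(G·x) is orthogonal (in the standard Hermitian inner product on ℂᵐ) to each of the first n−μ columns of G. (That is, the squared-up system with boundary rows enforces the boundary conditions exactly while requiring the residual to be orthogonal to the range of the first n−μ columns of G.) -/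
/-!
Write `r = M x - λ G x`. The squared-up equation says `Q₋ᴴ r = 0`, and the orthogonality
conditions say `G₋ᴴ r = 0`, where `G₋` is the first `n - μ` columns of `G`. Because `R` is upper
triangular, `G₋ = Q₋ R₀` with `R₀` the leading `(n - μ) × (n - μ)` block of `R`, which is invertible
since its diagonal is part of that of `R`. Hence `G₋ᴴ r = R₀ᴴ (Q₋ᴴ r)` vanishes iff `Q₋ᴴ r` does.
-/

open Matrix

namespace Matrix

variable {α : Type*}

theorem IsUpperTriangular.submatrix_of_strictMono {ι κ : Type*} [LinearOrder ι] [LinearOrder κ]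
    [Zero α] {M : Matrix κ κ α} (hM : M.IsUpperTriangular) {f : ι → κ} (hf : StrictMono f) :
    (M.submatrix f f).IsUpperTriangular :=
  fun _ _ hij => hM (hf hij)

theorem IsUpperTriangular.isUnit_submatrix_of_strictMono {ι κ : Type*}
    [LinearOrder ι] [LinearOrder κ] [Fintype ι] [Fintype κ] [DecidableEq ι] [DecidableEq κ]
    [CommRing α] {M : Matrix κ κ α} (hM : M.IsUpperTriangular) (hu : IsUnit M)
    {f : ι → κ} (hf : StrictMono f) : IsUnit (M.submatrix f f) := by
  rw [isUnit_iff_isUnit_det, det_of_isUpperTriangular hM, IsUnit.prod_univ_iff] at hu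
  rw [isUnit_iff_isUnit_det, det_of_isUpperTriangular (hM.submatrix_of_strictMono hf),
    IsUnit.prod_univ_iff]
  exact fun i => hu (f i)

theorem IsUpperTriangular.mul_submatrix_castLE {l : Type*} [NonUnitalNonAssocSemiring α]
    {n ν : ℕ} (h : ν ≤ n) (Q : Matrix l (Fin n) α) {R : Matrix (Fin n) (Fin n) α}
    (hR : R.IsUpperTriangular) :
    (Q * R).submatrix id (Fin.castLE h) =
      Q.submatrix id (Fin.castLE h) * R.submatrix (Fin.castLE h) (Fin.castLE h) := by
  ext i j
  refine (Fintype.sum_of_injective (Fin.castLE h) (Fin.castLE_injective h) _ _ ?_ ?_).symm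
  · rintro k hk
    have hνk : ν ≤ k := not_lt.mp fun hkν => hk ⟨⟨k, hkν⟩, rfl⟩
    have hRk : R k (Fin.castLE h j) = 0 := hR (Fin.lt_def.mpr (j.isLt.trans_le hνk))
    simp [hRk]
  · exact fun _ => rfl

theorem forall_star_dotProduct_col_eq_zero_iff {l m : Type*} [Fintype l] [NonUnitalSemiring α]
    [StarRing α] (A : Matrix l m α) (r : l → α) :
    (∀ j, star r ⬝ᵥ (fun i => A i j) = 0) ↔ Aᴴ *ᵥ r = 0 := by
  rw [mulVec_conjTranspose, star_eq_zero, funext_iff]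
  rfl

theorem conjTranspose_mulVec_eq_zero_iff_of_eq_mul_isUnit {l m : Type*} [Fintype l] [Fintype m]
    [DecidableEq m] [Semiring α] [StarRing α] {A B : Matrix l m α} {C : Matrix m m α}
    (hABC : A = B * C) (hC : IsUnit C) (r : l → α) :
    Aᴴ *ᵥ r = 0 ↔ Bᴴ *ᵥ r = 0 := by
  have hinj : Function.Injective (Cᴴ *ᵥ ·) :=
    mulVec_injective_of_isUnit ((isUnit_conjTranspose C).mpr hC)
  rw [hABC, conjTranspose_mul, ← mulVec_mulVec, hinj.eq_iff' (mulVec_zero Cᴴ)]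

end Matrix

theorem squared_up_iff_bc_and_orthogonality_general
    (m n μ : ℕ)
    (G Q : Matrix (Fin m) (Fin n) ℂ)
    (R : Matrix (Fin n) (Fin n) ℂ)
    (hRtri : R.BlockTriangular id)
    (hRinv : IsUnit R)
    (hQR : G = Q * R)
    (M : Matrix (Fin m) (Fin n) ℂ)
    (B : Matrix (Fin μ) (Fin m) ℂ)
    (Qminus : Matrix (Fin m) (Fin (n - μ)) ℂ)
    (hQminus : Qminus = Q.submatrix id (Fin.castLE (Nat.sub_le n μ)))
    (x : Fin n → ℂ) (lam : ℂ) :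
    (Qminusᴴ.mulVec (M.mulVec x) = lam • (Qminusᴴ * G).mulVec x ∧
        (B * G).mulVec x = 0) ↔
      ((B * G).mulVec x = 0 ∧
        ∀ j : Fin (n - μ),
          star (M.mulVec x - lam • G.mulVec x) ⬝ᵥ
            (fun i : Fin m => G i (Fin.castLE (Nat.sub_le n μ) j)) = 0) := by
  have hR : R.IsUpperTriangular := hRtri
  set c := Fin.castLE (Nat.sub_le n μ)
  have hc : StrictMono c := Fin.strictMono_castLE _
  have hsquared : Qminusᴴ *ᵥ (M *ᵥ x) = lam • (Qminusᴴ * G) *ᵥ x ↔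
      Qminusᴴ *ᵥ (M *ᵥ x - lam • G *ᵥ x) = 0 := by
    rw [mulVec_sub, mulVec_smul, ← mulVec_mulVec, sub_eq_zero]
  have hcols : G.submatrix id c = Qminus * R.submatrix c c := by
    rw [hQR, hQminus]
    exact hR.mul_submatrix_castLE _ Q
  rw [hsquared, ← conjTranspose_mulVec_eq_zero_iff_of_eq_mul_isUnit hcols
      (hR.isUnit_submatrix_of_strictMono hRinv hc),
    ← forall_star_dotProduct_col_eq_zero_iff, and_comm]
  rfl

/-- With `μ` boundary conditions `B G x = 0` (`0 < μ < n`) and `Q₋` the first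
`n - μ` columns of `Q`, the squared-up system
`Q₋ᴴ M x = λ Q₋ᴴ G x  and  B G x = 0`
holds iff the boundary conditions hold exactly and the residual `M x - λ G x`
is orthogonal (standard Hermitian inner product on ℂᵐ) to each of the first
`n - μ` columns of `G`, given a QR factorization `G = Q R` with `Qᴴ Q = I`
and `R` invertible upper triangular. -/
theorem squared_up_iff_bc_and_orthogonality
    (m n μ : ℕ) (hm : 0 < m) (hn : 0 < n) (hmn : n ≤ m)
    (hμ : 0 < μ) (hμn : μ < n)
    (G Q : Matrix (Fin m) (Fin n) ℂ)
    (R : Matrix (Fin n) (Fin n) ℂ)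
    (hQ : Qᴴ * Q = 1)
    (hRtri : R.BlockTriangular id)
    (hRinv : IsUnit R)
    (hQR : G = Q * R)
    (M : Matrix (Fin m) (Fin n) ℂ)
    (B : Matrix (Fin μ) (Fin m) ℂ)
    (Qminus : Matrix (Fin m) (Fin (n - μ)) ℂ)
    (hQminus : Qminus = Q.submatrix id (Fin.castLE (Nat.sub_le n μ)))
    (x : Fin n → ℂ) (lam : ℂ) :
    (Qminusᴴ.mulVec (M.mulVec x) = lam • (Qminusᴴ * G).mulVec x ∧
        (B * G).mulVec x = 0) ↔
      ((B * G).mulVec x = 0 ∧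
        ∀ j : Fin (n - μ),
          star (M.mulVec x - lam • G.mulVec x) ⬝ᵥ
            (fun i : Fin m => G i (Fin.castLE (Nat.sub_le n μ) j)) = 0) :=
  squared_up_iff_bc_and_orthogonality_general m n μ G Q R hRtri hRinv hQR M B Qminus hQminus x lam
end
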